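/- Let K ≥ 1 and φ ∈ ℂⁿ with h = φ·φ satisfying the K-quasiconformality inequality ‖φ‖² ≤ ((K²+1)/(2K))·√(‖φ‖⁴ − |h|²). Then for every ζ ∈ ℂ, (2/(K²+1))·(2‖φ‖²|ζ|²) ≤ 2·Re(h·ζ²) + 2‖φ‖²|ζ|² ≤ (2K²/(K²+1))·(2‖φ‖²|ζ|²). (This is the pointwise form of the metric comparison 2/(K²+1)·Γ ≤ ds² ≤ 2K²/(K²+1)·Γ between the induced metric ds² = h dz² + 2‖φ‖²|dz|² + conj(h dz²) and the Klotz metric Γ = 2‖φ‖²|dz|².) -/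

import Mathlib

/-- Hermitian square norm on `ℂⁿ`: `‖a‖² = Σᵢ |aᵢ|²`. -/
noncomputable def hnorm2 {n : ℕ} (a : Fin n → ℂ) : ℝ := ∑ i, ‖a i‖ ^ 2

/-- The `ℂ`-bilinear dot product on `ℂⁿ`: `a·b = Σᵢ aᵢbᵢ`. -/
noncomputable def cdot {n : ℕ} (a b : Fin n → ℂ) : ℂ := ∑ i, a i * b i

/-- Pointwise comparison between the induced metric
`ds² = h dz² + 2‖φ‖²|dz|² + conj(h dz²)` and the Klotz metric `Γ = 2‖φ‖²|dz|²`
for a `K`-quasiconformal configuration: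
`(2/(K²+1))·(2‖φ‖²|ζ|²) ≤ 2 Re(h ζ²) + 2‖φ‖²|ζ|² ≤ (2K²/(K²+1))·(2‖φ‖²|ζ|²)`. -/
theorem metric_comparison {n : ℕ} (K : ℝ) (hK : 1 ≤ K)
    (φ : Fin n → ℂ) (h : ℂ) (hh : h = cdot φ φ)
    (hQC : hnorm2 φ
        ≤ ((K ^ 2 + 1) / (2 * K)) *
            Real.sqrt ((hnorm2 φ) ^ 2 - ‖h‖ ^ 2)) :
    ∀ ζ : ℂ,
      (2 / (K ^ 2 + 1)) * (2 * hnorm2 φ * ‖ζ‖ ^ 2)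
          ≤ 2 * (h * ζ ^ 2).re + 2 * hnorm2 φ * ‖ζ‖ ^ 2 ∧
      2 * (h * ζ ^ 2).re + 2 * hnorm2 φ * ‖ζ‖ ^ 2
          ≤ (2 * K ^ 2 / (K ^ 2 + 1)) * (2 * hnorm2 φ * ‖ζ‖ ^ 2) := by
  set N := hnorm2 φ with hN
  set A := ‖h‖ with hA
  have hA0 : 0 ≤ A := norm_nonneg h
  have hAN : A ≤ N := by
    rw [hA, hh, cdot]
    refine le_trans (norm_sum_le _ _) ?_
    rw [hN, hnorm2]
    refine Finset.sum_le_sum fun i _ => ?_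
    rw [norm_mul, sq]
  have hN0 : 0 ≤ N := le_trans hA0 hAN
  have hK0 : (0:ℝ) < K := lt_of_lt_of_le one_pos hK
  have hdiff : 0 ≤ N ^ 2 - A ^ 2 := by nlinarith
  have hsq : N ^ 2 ≤ ((K ^ 2 + 1) / (2 * K)) ^ 2 * (N ^ 2 - A ^ 2) := by
    have h1 := Real.sq_sqrt hdiff
    have h2 : N ^ 2 ≤ (((K ^ 2 + 1) / (2 * K)) * Real.sqrt (N ^ 2 - A ^ 2)) ^ 2 := by
      apply sq_le_sq' _ hQC
      nlinarith [Real.sqrt_nonneg (N ^ 2 - A ^ 2), div_nonneg (by nlinarith : (0:ℝ) ≤ K ^ 2 + 1) (by linarith : (0:ℝ) ≤ 2 * K)]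
    calc N ^ 2 ≤ _ := h2
      _ = ((K ^ 2 + 1) / (2 * K)) ^ 2 * (N ^ 2 - A ^ 2) := by ring_nf; rw [h1]; ring
  have hkey : A * (K ^ 2 + 1) ≤ (K ^ 2 - 1) * N := by
    have hsq' : A ^ 2 * (K ^ 2 + 1) ^ 2 ≤ ((K ^ 2 - 1) * N) ^ 2 := by
      rw [div_pow, div_mul_eq_mul_div, le_div_iff₀ (by positivity)] at hsq
      nlinarith
    have h1 : 0 ≤ (K ^ 2 - 1) * N := mul_nonneg (by nlinarith) hN0
    nlinarith [sq_nonneg (A * (K ^ 2 + 1) - (K ^ 2 - 1) * N)]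
  intro ζ
  set Z := ‖ζ‖ ^ 2 with hZ
  have hZ0 : 0 ≤ Z := sq_nonneg _
  have hRe : |(h * ζ ^ 2).re| ≤ A * Z := by
    calc |(h * ζ ^ 2).re| ≤ ‖h * ζ ^ 2‖ := Complex.abs_re_le_norm _
      _ = A * Z := by rw [norm_mul, norm_pow]
  rw [abs_le] at hRe
  have hKp : (0:ℝ) < K ^ 2 + 1 := by nlinarith
  constructor
  · rw [div_mul_eq_mul_div, div_le_iff₀ hKp]
    nlinarith [mul_le_mul_of_nonneg_right hkey hZ0]
  · rw [div_mul_eq_mul_div, le_div_iff₀ hKp]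
    nlinarith [mul_le_mul_of_nonneg_right hkey hZ0]
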